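/- (Proposition 2, first-order discretization of the bridge ODE.) Let 0 < t ≤ s < 1, let x_1, X_0 ∈ ℝ^d, and let y : [t,s] → ℝ^d be differentiable satisfying, for every τ ∈ [t,s], y'(τ) = f(τ)·y(τ) − g(τ)²·(y(τ) − ᾱ_τ x_1)/(2 α_τ² σ̄_τ²) + g(τ)²·(y(τ) − α_τ X_0)/(2 α_τ² σ_τ²) (i.e., the bridge ODE with the data prediction frozen at the constant value X_0). Then y(t) = (α_t σ_t σ̄_t)/(α_s σ_s σ̄_s)·y(s) + (α_t/σ_1²)·[ (σ̄_t² − (σ̄_s σ_t σ̄_t)/σ_s)·X_0 + (σ_t² − (σ_s σ_t σ̄_t)/σ̄_s)·(x_1/α_1) ]. -/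

import Mathlib

/-- Scaling coefficient `α_t = exp(∫_0^t f)`. -/
noncomputable def alpha (f : ℝ → ℝ) (t : ℝ) : ℝ := Real.exp (∫ τ in (0:ℝ)..t, f τ)

/-- Reverse scaling coefficient `ᾱ_t = exp(-∫_t^1 f)`. -/
noncomputable def alphaBar (f : ℝ → ℝ) (t : ℝ) : ℝ := Real.exp (-∫ τ in t..(1:ℝ), f τ)

/-- Accumulated variance `σ_t² = ∫_0^t g²/α²`. -/
noncomputable def sigmaSq (f g : ℝ → ℝ) (t : ℝ) : ℝ :=
  ∫ τ in (0:ℝ)..t, (g τ)^2 / (alpha f τ)^2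

/-- Reverse accumulated variance `σ̄_t² = ∫_t^1 g²/α²`. -/
noncomputable def sigmaBarSq (f g : ℝ → ℝ) (t : ℝ) : ℝ :=
  ∫ τ in t..(1:ℝ), (g τ)^2 / (alpha f τ)^2

/-- Accumulated standard deviation `σ_t`. -/
noncomputable def sigma' (f g : ℝ → ℝ) (t : ℝ) : ℝ := Real.sqrt (sigmaSq f g t)

/-- Reverse accumulated standard deviation `σ̄_t`. -/
noncomputable def sigmaBar (f g : ℝ → ℝ) (t : ℝ) : ℝ := Real.sqrt (sigmaBarSq f g t)

/-! The bridge ODE is linear in `y`, and its homogeneous solutions are the multiples of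
`α_τ σ_τ σ̄_τ`: indeed `(α σ σ̄)' / (α σ σ̄) = f + q / (2σ²) − q / (2σ̄²)` with `q = g²/α²`,
since `(σ²)' = q` and `(σ̄²)' = −q`. Dividing `y` by this integrating factor, the two
inhomogeneous terms become exact derivatives of `σ/σ̄` and `σ̄/σ`, so
`y_τ / (α_τ σ_τ σ̄_τ) − (σ_τ/σ̄_τ) x₁/(α₁ σ₁²) − (σ̄_τ/σ_τ) X₀/σ₁²` is constant on `[t, s]`.
Comparing its values at `t` and `s` and using `σ_t² + σ̄_t² = σ₁²` gives the formula. -/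

open Set

noncomputable def sigmaSqRate (f g : ℝ → ℝ) (τ : ℝ) : ℝ := g τ ^ 2 / alpha f τ ^ 2

noncomputable def bridgeVelocity {E : Type*} [AddCommGroup E] [Module ℝ E]
    (f g : ℝ → ℝ) (x1 X0 : E) (τ : ℝ) (z : E) : E :=
  f τ • z
    - ((g τ)^2 / (2 * (alpha f τ)^2 * sigmaBarSq f g τ)) • (z - alphaBar f τ • x1)
    + ((g τ)^2 / (2 * (alpha f τ)^2 * sigmaSq f g τ)) • (z - alpha f τ • X0)

noncomputable def bridgeInvariant {E : Type*} [AddCommGroup E] [Module ℝ E]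
    (f g : ℝ → ℝ) (x1 X0 : E) (y : ℝ → E) (τ : ℝ) : E :=
  (alpha f τ * sigma' f g τ * sigmaBar f g τ)⁻¹ • y τ
    - (sigma' f g τ / sigmaBar f g τ / (alpha f 1 * sigmaSq f g 1)) • x1
    - (sigmaBar f g τ / sigma' f g τ / sigmaSq f g 1) • X0

section Schedule

variable {f g : ℝ → ℝ} {τ : ℝ}

theorem alpha_pos (f : ℝ → ℝ) (τ : ℝ) : 0 < alpha f τ := Real.exp_pos _

theorem intervalIntegrable_of_continuousOn_Icc {φ : ℝ → ℝ} {a b c d : ℝ}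
    (hφ : ContinuousOn φ (Icc a b)) (hc : c ∈ Icc a b) (hd : d ∈ Icc a b) :
    IntervalIntegrable φ MeasureTheory.volume c d :=
  (hφ.mono (uIcc_subset_Icc hc hd)).intervalIntegrable

theorem hasDerivAt_integral_of_continuousOn_Icc {φ : ℝ → ℝ} {a b : ℝ}
    (hφ : ContinuousOn φ (Icc a b)) (hτ : τ ∈ Ioo a b) :
    HasDerivAt (fun u => ∫ x in a..u, φ x) (φ τ) τ :=
  have hφ' : ContinuousOn φ (Ioo a b) := hφ.mono Ioo_subset_Icc_self
  intervalIntegral.integral_hasDerivAt_right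
    (intervalIntegrable_of_continuousOn_Icc hφ (left_mem_Icc.2 (hτ.1.trans hτ.2).le)
      (Ioo_subset_Icc_self hτ))
    (hφ'.stronglyMeasurableAtFilter isOpen_Ioo τ hτ)
    (hφ'.continuousAt (Ioo_mem_nhds hτ.1 hτ.2))

theorem alphaBar_eq_alpha_div (hf : ContinuousOn f (Icc 0 1)) (hτ : τ ∈ Icc (0:ℝ) 1) :
    alphaBar f τ = alpha f τ / alpha f 1 := by
  have hsplit := intervalIntegral.integral_add_adjacent_intervals
    (intervalIntegrable_of_continuousOn_Icc hf (left_mem_Icc.2 zero_le_one) hτ)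
    (intervalIntegrable_of_continuousOn_Icc hf hτ (right_mem_Icc.2 zero_le_one))
  rw [alphaBar, alpha, alpha, ← Real.exp_sub, ← hsplit, sub_add_cancel_left]

theorem continuousOn_alpha (hf : ContinuousOn f (Icc 0 1)) : ContinuousOn (alpha f) (Icc 0 1) :=
  Real.continuous_exp.comp_continuousOn <| by
    simpa only [uIcc_of_le zero_le_one] using intervalIntegral.continuousOn_primitive_interval'
      (hf.intervalIntegrable_of_Icc zero_le_one) left_mem_uIcc

theorem hasDerivAt_alpha (hf : ContinuousOn f (Icc 0 1)) (hτ : τ ∈ Ioo (0:ℝ) 1) :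
    HasDerivAt (alpha f) (alpha f τ * f τ) τ :=
  (hasDerivAt_integral_of_continuousOn_Icc hf hτ).exp

theorem continuousOn_sigmaSqRate (hf : ContinuousOn f (Icc 0 1))
    (hg : ContinuousOn g (Icc 0 1)) : ContinuousOn (sigmaSqRate f g) (Icc 0 1) :=
  (hg.pow 2).div ((continuousOn_alpha hf).pow 2) fun τ _ => (pow_pos (alpha_pos f τ) 2).ne'

theorem sigmaSqRate_pos (hg : g τ ≠ 0) : 0 < sigmaSqRate f g τ :=
  div_pos (by positivity) (pow_pos (alpha_pos f τ) 2)

theorem sigmaSq_add_sigmaBarSq (hf : ContinuousOn f (Icc 0 1)) (hg : ContinuousOn g (Icc 0 1))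
    (hτ : τ ∈ Icc (0:ℝ) 1) : sigmaSq f g τ + sigmaBarSq f g τ = sigmaSq f g 1 :=
  intervalIntegral.integral_add_adjacent_intervals
    (intervalIntegrable_of_continuousOn_Icc (continuousOn_sigmaSqRate hf hg)
      (left_mem_Icc.2 zero_le_one) hτ)
    (intervalIntegrable_of_continuousOn_Icc (continuousOn_sigmaSqRate hf hg)
      hτ (right_mem_Icc.2 zero_le_one))

theorem hasDerivAt_sigmaSq (hf : ContinuousOn f (Icc 0 1)) (hg : ContinuousOn g (Icc 0 1))
    (hτ : τ ∈ Ioo (0:ℝ) 1) : HasDerivAt (sigmaSq f g) (sigmaSqRate f g τ) τ :=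
  hasDerivAt_integral_of_continuousOn_Icc (continuousOn_sigmaSqRate hf hg) hτ

theorem hasDerivAt_sigmaBarSq (hf : ContinuousOn f (Icc 0 1)) (hg : ContinuousOn g (Icc 0 1))
    (hτ : τ ∈ Ioo (0:ℝ) 1) : HasDerivAt (sigmaBarSq f g) (-sigmaSqRate f g τ) τ := by
  have hdiff : HasDerivAt (fun u => sigmaSq f g 1 - sigmaSq f g u) (-sigmaSqRate f g τ) τ := by
    simpa only [zero_sub] using (hasDerivAt_sigmaSq hf hg hτ).const_sub (sigmaSq f g 1)
  refine hdiff.congr_of_eventuallyEq ?_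
  filter_upwards [Ioo_mem_nhds hτ.1 hτ.2] with u hu
  rw [← sigmaSq_add_sigmaBarSq hf hg (Ioo_subset_Icc_self hu), add_sub_cancel_left]

theorem sigmaSq_pos (hf : ContinuousOn f (Icc 0 1)) (hg : ContinuousOn g (Icc 0 1))
    (hgpos : ∀ t ∈ Icc (0:ℝ) 1, 0 < g t) (h0 : 0 < τ) (h1 : τ ≤ 1) : 0 < sigmaSq f g τ :=
  intervalIntegral.intervalIntegral_pos_of_pos_on
    (intervalIntegrable_of_continuousOn_Icc (continuousOn_sigmaSqRate hf hg)
      (left_mem_Icc.2 zero_le_one) ⟨h0.le, h1⟩)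
    (fun u hu => sigmaSqRate_pos (hgpos u ⟨hu.1.le, hu.2.le.trans h1⟩).ne') h0

theorem sigmaBarSq_pos (hf : ContinuousOn f (Icc 0 1)) (hg : ContinuousOn g (Icc 0 1))
    (hgpos : ∀ t ∈ Icc (0:ℝ) 1, 0 < g t) (h0 : 0 ≤ τ) (h1 : τ < 1) : 0 < sigmaBarSq f g τ :=
  intervalIntegral.intervalIntegral_pos_of_pos_on
    (intervalIntegrable_of_continuousOn_Icc (continuousOn_sigmaSqRate hf hg)
      ⟨h0, h1.le⟩ (right_mem_Icc.2 zero_le_one))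
    (fun u hu => sigmaSqRate_pos (hgpos u ⟨h0.trans hu.1.le, hu.2.le⟩).ne') h1

theorem hasDerivAt_sigma' (hf : ContinuousOn f (Icc 0 1)) (hg : ContinuousOn g (Icc 0 1))
    (hτ : τ ∈ Ioo (0:ℝ) 1) (hσ : sigmaSq f g τ ≠ 0) :
    HasDerivAt (sigma' f g) (sigmaSqRate f g τ / (2 * sigma' f g τ)) τ :=
  (hasDerivAt_sigmaSq hf hg hτ).sqrt hσ

theorem hasDerivAt_sigmaBar (hf : ContinuousOn f (Icc 0 1)) (hg : ContinuousOn g (Icc 0 1))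
    (hτ : τ ∈ Ioo (0:ℝ) 1) (hσ : sigmaBarSq f g τ ≠ 0) :
    HasDerivAt (sigmaBar f g) (-sigmaSqRate f g τ / (2 * sigmaBar f g τ)) τ :=
  (hasDerivAt_sigmaBarSq hf hg hτ).sqrt hσ

end Schedule

section Bridge

variable {E : Type*} [NormedAddCommGroup E] [NormedSpace ℝ E] {f g : ℝ → ℝ} {x1 X0 : E}
  {y : ℝ → E} {τ : ℝ}

theorem hasDerivAt_bridgeInvariant (hf : ContinuousOn f (Icc 0 1))
    (hg : ContinuousOn g (Icc 0 1)) (hgpos : ∀ t ∈ Icc (0:ℝ) 1, 0 < g t)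
    (hτ : τ ∈ Ioo (0:ℝ) 1) (hy : HasDerivAt y (bridgeVelocity f g x1 X0 τ (y τ)) τ) :
    HasDerivAt (bridgeInvariant f g x1 X0 y) 0 τ := by
  have hσ := sigmaSq_pos hf hg hgpos hτ.1 hτ.2.le
  have hσbar := sigmaBarSq_pos hf hg hgpos hτ.1.le hτ.2
  have hS := hasDerivAt_sigma' hf hg hτ hσ.ne'
  have hT := hasDerivAt_sigmaBar hf hg hτ hσbar.ne'
  have hSpos : 0 < sigma' f g τ := Real.sqrt_pos.2 hσ
  have hTpos : 0 < sigmaBar f g τ := Real.sqrt_pos.2 hσbar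
  have hα := alpha_pos f τ
  have hα1 := alpha_pos f 1
  have hP := ((hasDerivAt_alpha hf hτ).mul hS).mul hT
  have hD := (((hP.inv (by simp only [Pi.mul_apply]; positivity)).smul hy).sub
    (((hS.div hT hTpos.ne').div_const (alpha f 1 * sigmaSq f g 1)).smul_const x1)).sub
    (((hT.div hS hSpos.ne').div_const (sigmaSq f g 1)).smul_const X0)
  refine hD.congr_deriv ?_
  have hS2 : sigma' f g τ ^ 2 = sigmaSq f g τ := Real.sq_sqrt hσ.le
  have hT2 : sigmaBar f g τ ^ 2 = sigmaBarSq f g τ := Real.sq_sqrt hσbar.le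
  have hg2 : g τ ^ 2 = sigmaSqRate f g τ * alpha f τ ^ 2 := by
    rw [sigmaSqRate, div_mul_cancel₀ _ (by positivity)]
  rw [bridgeVelocity, alphaBar_eq_alpha_div hf (Ioo_subset_Icc_self hτ),
    ← sigmaSq_add_sigmaBarSq hf hg (Ioo_subset_Icc_self hτ), hg2,
    ← hS2, ← hT2]
  simp only [Pi.mul_apply, Pi.inv_apply]
  match_scalars <;> field_simp <;> ring

theorem bridgeInvariant_eq_of_forall_hasDerivAt (hf : ContinuousOn f (Icc 0 1))
    (hg : ContinuousOn g (Icc 0 1)) (hgpos : ∀ t ∈ Icc (0:ℝ) 1, 0 < g t) {s t : ℝ}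
    (ht : 0 < t) (hts : t ≤ s) (hs : s < 1)
    (hy : ∀ τ ∈ Icc t s, HasDerivAt y (bridgeVelocity f g x1 X0 τ (y τ)) τ) :
    bridgeInvariant f g x1 X0 y s = bridgeInvariant f g x1 X0 y t := by
  have hderiv : ∀ τ ∈ Icc t s, HasDerivAt (bridgeInvariant f g x1 X0 y) 0 τ := fun τ hτ =>
    hasDerivAt_bridgeInvariant hf hg hgpos ⟨ht.trans_le hτ.1, hτ.2.trans_lt hs⟩ (hy τ hτ)
  exact constant_of_has_deriv_right_zero
    (fun τ hτ => (hderiv τ hτ).continuousAt.continuousWithinAt)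
    (fun τ hτ => (hderiv τ (Ico_subset_Icc_self hτ)).hasDerivWithinAt) s ⟨hts, le_rfl⟩

end Bridge

/-- Proposition 2, first-order discretization of the bridge ODE: if `y` solves the bridge
ODE on `[t,s]` with the data prediction frozen at the constant value `X₀`, then
`y(t) = (α_t σ_t σ̄_t)/(α_s σ_s σ̄_s) y(s)
        + (α_t/σ₁²)[(σ̄_t² − σ̄_s σ_t σ̄_t/σ_s) X₀ + (σ_t² − σ_s σ_t σ̄_t/σ̄_s)(x₁/α₁)]`. -/
theorem bridge_ode_first_order_discretization
    (f g : ℝ → ℝ)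
    (hf : ContinuousOn f (Set.Icc 0 1)) (hg : ContinuousOn g (Set.Icc 0 1))
    (hgpos : ∀ t ∈ Set.Icc (0:ℝ) 1, 0 < g t)
    (d : ℕ) (x1 X0 : Fin d → ℝ)
    (s t : ℝ) (ht : 0 < t) (hts : t ≤ s) (hs : s < 1)
    (y : ℝ → Fin d → ℝ)
    (hy : ∀ τ ∈ Set.Icc t s,
      HasDerivAt y
        (f τ • y τ
          - ((g τ)^2 / (2 * (alpha f τ)^2 * sigmaBarSq f g τ)) • (y τ - alphaBar f τ • x1)
          + ((g τ)^2 / (2 * (alpha f τ)^2 * sigmaSq f g τ)) • (y τ - alpha f τ • X0)) τ) :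
    y t = (alpha f t * sigma' f g t * sigmaBar f g t
            / (alpha f s * sigma' f g s * sigmaBar f g s)) • y s
      + (alpha f t / sigmaSq f g 1) •
          ((sigmaBarSq f g t
              - sigmaBar f g s * sigma' f g t * sigmaBar f g t / sigma' f g s) • X0
            + (sigmaSq f g t
                - sigma' f g s * sigma' f g t * sigmaBar f g t / sigmaBar f g s) •
              ((alpha f 1)⁻¹ • x1)) := by
  have hσt := sigmaSq_pos hf hg hgpos ht (hts.trans hs.le)
  have hσbart := sigmaBarSq_pos hf hg hgpos ht.le (hts.trans_lt hs)
  have hσ1 := sigmaSq_pos hf hg hgpos one_pos le_rfl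
  have hSt : 0 < sigma' f g t := Real.sqrt_pos.2 hσt
  have hTt : 0 < sigmaBar f g t := Real.sqrt_pos.2 hσbart
  have hSs : 0 < sigma' f g s :=
    Real.sqrt_pos.2 (sigmaSq_pos hf hg hgpos (ht.trans_le hts) hs.le)
  have hTs : 0 < sigmaBar f g s :=
    Real.sqrt_pos.2 (sigmaBarSq_pos hf hg hgpos (ht.le.trans hts) hs)
  have hS2t : sigma' f g t ^ 2 = sigmaSq f g t := Real.sq_sqrt hσt.le
  have hT2t : sigmaBar f g t ^ 2 = sigmaBarSq f g t := Real.sq_sqrt hσbart.le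
  have hαt := alpha_pos f t
  have hαs := alpha_pos f s
  have hα1 := alpha_pos f 1
  have hyt : y t = (alpha f t * sigma' f g t * sigmaBar f g t) •
      (bridgeInvariant f g x1 X0 y t
        + (sigmaBar f g t / sigma' f g t / sigmaSq f g 1) • X0
        + (sigma' f g t / sigmaBar f g t / (alpha f 1 * sigmaSq f g 1)) • x1) := by
    rw [bridgeInvariant, sub_add_cancel, sub_add_cancel, smul_inv_smul₀ (by positivity)]
  rw [hyt, ← bridgeInvariant_eq_of_forall_hasDerivAt hf hg hgpos ht hts hs hy, bridgeInvariant,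
    ← hS2t, ← hT2t]
  match_scalars <;> field_simp <;> ring
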